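/- arXiv:2605.17827 — 2 statements merged into one kernel-verified Lean document; each statement's English description precedes it below -/
import Mathlib

section
/- Let (Ω, μ) be a probability space and let v : Ω → ℝ^d be a random vector such that for all indices i, j the product v_i v_j is integrable and E[v_i v_j] equals 1 if i = j and 0 otherwise. Then for any matrices A ∈ ℝ^{d×p}, B ∈ ℝ^{d×q} and any ε ≥ 0, the stochastic estimator of the differential-independence regularizer equals the exact ratio: ‖E_v[(Bᵀ v)(Aᵀ v)ᵀ]‖_F² / (E_v[‖Aᵀ v‖₂²] · E_v[‖Bᵀ v‖₂²] + ε) = ‖Bᵀ A‖_F² / (‖A‖_F² ‖B‖_F² + ε), where the matrix E_v[(Bᵀ v)(Aᵀ v)ᵀ] ∈ ℝ^{q×p} is formed entrywise by expectations. -/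
/-!
Since `E[v vᵀ] = I`, the bilinear form `(w, u) ↦ E[⟨w, v⟩⟨u, v⟩]` is the dot product. The entries
of `E[(Bᵀv)(Aᵀv)ᵀ]` are its values on pairs of columns of `B` and `A`, i.e. the entries of `BᵀA`,
and `E[‖Mᵀv‖²]` is the sum of its values on the columns of `M`, i.e. `‖M‖_F²`.
-/

open MeasureTheory Matrix

namespace Matrix

variable {Ω ι : Type*} [MeasurableSpace Ω] [Fintype ι] {μ : Measure Ω} {v : Ω → ι → ℝ}

lemma dotProduct_mul_dotProduct_eq_sum {α : Type*} [CommSemiring α] (w u x : ι → α) :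
    (w ⬝ᵥ x) * (u ⬝ᵥ x) = ∑ i, ∑ j, w i * u j * (x i * x j) := by
  simp only [dotProduct, Finset.sum_mul_sum]
  exact Finset.sum_congr rfl fun i _ => Finset.sum_congr rfl fun j _ => by ring

lemma integrable_dotProduct_mul_dotProduct
    (hint : ∀ i j, Integrable (fun ω => v ω i * v ω j) μ) (w u : ι → ℝ) :
    Integrable (fun ω => (w ⬝ᵥ v ω) * (u ⬝ᵥ v ω)) μ := by
  simp only [dotProduct_mul_dotProduct_eq_sum]
  exact integrable_finsetSum _ fun i _ => integrable_finsetSum _ fun j _ =>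
    (hint i j).const_mul _

lemma integrable_transpose_mulVec_mul_transpose_mulVec {κ τ : Type*}
    (hint : ∀ i j, Integrable (fun ω => v ω i * v ω j) μ) (M : Matrix ι κ ℝ) (N : Matrix ι τ ℝ)
    (k : κ) (l : τ) :
    Integrable (fun ω => (Mᵀ *ᵥ v ω) k * (Nᵀ *ᵥ v ω) l) μ :=
  integrable_dotProduct_mul_dotProduct hint _ _

lemma integral_dotProduct_mul_dotProduct [DecidableEq ι]
    (hint : ∀ i j, Integrable (fun ω => v ω i * v ω j) μ)
    (hmom : ∀ i j, ∫ ω, v ω i * v ω j ∂μ = if i = j then (1 : ℝ) else 0) (w u : ι → ℝ) :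
    ∫ ω, (w ⬝ᵥ v ω) * (u ⬝ᵥ v ω) ∂μ = w ⬝ᵥ u := by
  simp only [dotProduct_mul_dotProduct_eq_sum]
  rw [integral_finsetSum _ fun i _ => integrable_finsetSum _ fun j _ => (hint i j).const_mul _]
  simp_rw [integral_finsetSum _ fun j _ => (hint _ j).const_mul _, integral_const_mul, hmom,
    mul_ite, mul_one, mul_zero, Finset.sum_ite_eq, Finset.mem_univ, if_true, dotProduct]

lemma integral_transpose_mulVec_mul_transpose_mulVec [DecidableEq ι] {κ τ : Type*}
    (hint : ∀ i j, Integrable (fun ω => v ω i * v ω j) μ)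
    (hmom : ∀ i j, ∫ ω, v ω i * v ω j ∂μ = if i = j then (1 : ℝ) else 0)
    (M : Matrix ι κ ℝ) (N : Matrix ι τ ℝ) (k : κ) (l : τ) :
    ∫ ω, (Mᵀ *ᵥ v ω) k * (Nᵀ *ᵥ v ω) l ∂μ = (Mᵀ * N) k l := by
  rw [mul_apply']
  exact integral_dotProduct_mul_dotProduct hint hmom _ _

lemma integral_sum_sq_transpose_mulVec [DecidableEq ι] {κ : Type*} [Fintype κ]
    (hint : ∀ i j, Integrable (fun ω => v ω i * v ω j) μ)
    (hmom : ∀ i j, ∫ ω, v ω i * v ω j ∂μ = if i = j then (1 : ℝ) else 0) (M : Matrix ι κ ℝ) :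
    ∫ ω, ∑ k, (Mᵀ *ᵥ v ω) k ^ 2 ∂μ = ∑ i, ∑ k, M i k ^ 2 := by
  simp_rw [sq]
  rw [integral_finsetSum _ fun k _ => integrable_transpose_mulVec_mul_transpose_mulVec hint M M k k,
    Finset.sum_comm]
  simp_rw [integral_transpose_mulVec_mul_transpose_mulVec hint hmom, mul_apply, transpose_apply]

end Matrix

theorem hutchinson_regularizer_exact_general
    {Ω : Type*} [MeasurableSpace Ω] (μ : Measure Ω)
    (d p q : ℕ) (v : Ω → Fin d → ℝ)
    (hint : ∀ i j : Fin d, Integrable (fun ω => v ω i * v ω j) μ)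
    (hmom : ∀ i j : Fin d, ∫ ω, v ω i * v ω j ∂μ = if i = j then (1 : ℝ) else 0)
    (A : Matrix (Fin d) (Fin p) ℝ) (B : Matrix (Fin d) (Fin q) ℝ)
    (ε : ℝ) :
    (∑ k, ∑ l, (∫ ω, (Bᵀ.mulVec (v ω)) k * (Aᵀ.mulVec (v ω)) l ∂μ) ^ 2) /
        ((∫ ω, ∑ l, (Aᵀ.mulVec (v ω) l) ^ 2 ∂μ) *
          (∫ ω, ∑ k, (Bᵀ.mulVec (v ω) k) ^ 2 ∂μ) + ε) =
      (∑ k, ∑ l, ((Bᵀ * A) k l) ^ 2) /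
        ((∑ i, ∑ l, (A i l) ^ 2) * (∑ i, ∑ k, (B i k) ^ 2) + ε) := by
  simp only [integral_transpose_mulVec_mul_transpose_mulVec hint hmom,
    integral_sum_sq_transpose_mulVec hint hmom]

/-- The stochastic (noise-probing) estimator of the differential-independence
regularizer equals the exact normalized cross-Gram ratio:
`‖E_v[(Bᵀv)(Aᵀv)ᵀ]‖_F² / (E_v[‖Aᵀv‖₂²]·E_v[‖Bᵀv‖₂²] + ε)
  = ‖BᵀA‖_F² / (‖A‖_F²‖B‖_F² + ε)`. -/
theorem hutchinson_regularizer_exact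
    {Ω : Type*} [MeasurableSpace Ω] (μ : Measure Ω) [IsProbabilityMeasure μ]
    (d p q : ℕ) (v : Ω → Fin d → ℝ)
    (hint : ∀ i j : Fin d, Integrable (fun ω => v ω i * v ω j) μ)
    (hmom : ∀ i j : Fin d, ∫ ω, v ω i * v ω j ∂μ = if i = j then (1 : ℝ) else 0)
    (A : Matrix (Fin d) (Fin p) ℝ) (B : Matrix (Fin d) (Fin q) ℝ)
    (ε : ℝ) (hε : 0 ≤ ε) :
    (∑ k, ∑ l, (∫ ω, (Bᵀ.mulVec (v ω)) k * (Aᵀ.mulVec (v ω)) l ∂μ) ^ 2) /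
        ((∫ ω, ∑ l, (Aᵀ.mulVec (v ω) l) ^ 2 ∂μ) *
          (∫ ω, ∑ k, (Bᵀ.mulVec (v ω) k) ^ 2 ∂μ) + ε) =
      (∑ k, ∑ l, ((Bᵀ * A) k l) ^ 2) /
        ((∑ i, ∑ l, (A i l) ^ 2) * (∑ i, ∑ k, (B i k) ^ 2) + ε) :=
  hutchinson_regularizer_exact_general μ d p q v hint hmom A B ε
end

section
/- Let E be a finite-dimensional real inner product space, let C and S be subspaces of E with orthogonal projections P_C and P_S (as linear maps E → E), and let κ ≥ 0 satisfy ‖P_S ∘ P_C‖ ≤ κ in operator norm. Let F_C and F_S be finite-dimensional real normed spaces, and suppose: (i) G : F_C → E is a linear map whose range is contained in C; (ii) B : F_S → E is a linear map whose range is contained in S and there exists c > 0 with ‖B y‖ ≥ c ‖y‖ for all y ∈ F_S; (iii) X : F_C → F_S and E₀ : F_C → E are linear maps with P_S ∘ E₀ = 0 and G = B ∘ X + E₀. Then c · ‖X‖ ≤ κ · ‖G‖, i.e. ‖X‖ ≤ (κ / c) ‖G‖ in operator norm. -/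
/-!
Since `G` takes values in `C` and `B` in `S`, while `P_S` kills `E₀`, applying `P_S ∘ P_C` to
`G = B ∘ X + E₀` gives `P_S ∘ P_C ∘ G = B ∘ X`. Hence `‖B ∘ X‖ ≤ κ ‖G‖`, and the lower bound on
`B` turns this into `c ‖X‖ ≤ κ ‖G‖`.
-/

namespace ContinuousLinearMap

variable {𝕜 E F G : Type*} [NontriviallyNormedField 𝕜]
  [SeminormedAddCommGroup E] [NormedSpace 𝕜 E] [SeminormedAddCommGroup F] [NormedSpace 𝕜 F]
  [SeminormedAddCommGroup G] [NormedSpace 𝕜 G]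

theorem mul_opNorm_le_opNorm_comp_of_forall_le (B : F →L[𝕜] G) (X : E →L[𝕜] F) {c : ℝ}
    (hB : ∀ y, c * ‖y‖ ≤ ‖B y‖) : c * ‖X‖ ≤ ‖B.comp X‖ := by
  rcases le_or_gt c 0 with hc | hc
  · exact (mul_nonpos_of_nonpos_of_nonneg hc (norm_nonneg X)).trans (norm_nonneg _)
  rw [← le_div_iff₀' hc]
  refine X.opNorm_le_bound (by positivity) fun x => ?_
  rw [div_mul_eq_mul_div, le_div_iff₀' hc]
  calc c * ‖X x‖ ≤ ‖B.comp X x‖ := hB (X x)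
    _ ≤ ‖B.comp X‖ * ‖x‖ := (B.comp X).le_opNorm x

end ContinuousLinearMap

namespace Submodule

variable {𝕜 E F : Type*} [RCLike 𝕜] [NormedAddCommGroup E] [InnerProductSpace 𝕜 E]
  [SeminormedAddCommGroup F] [NormedSpace 𝕜 F]

theorem starProjection_comp_of_forall_mem (K : Submodule 𝕜 E) [K.HasOrthogonalProjection]
    {f : F →L[𝕜] E} (hf : ∀ x, f x ∈ K) : K.starProjection.comp f = f :=
  ContinuousLinearMap.ext fun x => K.starProjection_eq_self_iff.mpr (hf x)

end Submodule

theorem robustness_core_general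
    {E : Type*} [NormedAddCommGroup E] [InnerProductSpace ℝ E] [FiniteDimensional ℝ E]
    {FC FS : Type*}
    [NormedAddCommGroup FC] [NormedSpace ℝ FC]
    [NormedAddCommGroup FS] [NormedSpace ℝ FS]
    (C S : Submodule ℝ E) (κ : ℝ)
    (hPSC : ‖(S.subtypeL.comp S.orthogonalProjectionOnto).comp
        (C.subtypeL.comp C.orthogonalProjectionOnto)‖ ≤ κ)
    (G : FC →L[ℝ] E) (hG : ∀ x, G x ∈ C)
    (B : FS →L[ℝ] E) (hB : ∀ y, B y ∈ S)
    (c : ℝ) (hBlow : ∀ y : FS, c * ‖y‖ ≤ ‖B y‖)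
    (X : FC →L[ℝ] FS) (E₀ : FC →L[ℝ] E)
    (hE₀ : (S.subtypeL.comp S.orthogonalProjectionOnto).comp E₀ = 0)
    (hdecomp : G = B.comp X + E₀) :
    c * ‖X‖ ≤ κ * ‖G‖ := by
  change ‖S.starProjection.comp C.starProjection‖ ≤ κ at hPSC
  change S.starProjection.comp E₀ = 0 at hE₀
  have hPG : (S.starProjection.comp C.starProjection).comp G = B.comp X := by
    rw [ContinuousLinearMap.comp_assoc, C.starProjection_comp_of_forall_mem hG, hdecomp,
      ContinuousLinearMap.comp_add, hE₀, add_zero, ← ContinuousLinearMap.comp_assoc,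
      S.starProjection_comp_of_forall_mem hB]
  calc c * ‖X‖ ≤ ‖B.comp X‖ := B.mul_opNorm_le_opNorm_comp_of_forall_le X hBlow
    _ = ‖(S.starProjection.comp C.starProjection).comp G‖ := by rw [hPG]
    _ ≤ ‖S.starProjection.comp C.starProjection‖ * ‖G‖ :=
      ContinuousLinearMap.opNorm_comp_le _ _
    _ ≤ κ * ‖G‖ := by gcongr

/-- Linear-algebraic core of the robustness theorem: if `‖P_S ∘ P_C‖ ≤ κ`, the range of
`G` lies in `C`, the range of `B` lies in `S` with `‖B y‖ ≥ c ‖y‖`, `P_S ∘ E₀ = 0`, and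
`G = B ∘ X + E₀`, then `c ‖X‖ ≤ κ ‖G‖`. -/
theorem robustness_core
    {E : Type*} [NormedAddCommGroup E] [InnerProductSpace ℝ E] [FiniteDimensional ℝ E]
    {FC FS : Type*}
    [NormedAddCommGroup FC] [NormedSpace ℝ FC] [FiniteDimensional ℝ FC]
    [NormedAddCommGroup FS] [NormedSpace ℝ FS] [FiniteDimensional ℝ FS]
    (C S : Submodule ℝ E) (κ : ℝ) (hκ : 0 ≤ κ)
    (hPSC : ‖(S.subtypeL.comp S.orthogonalProjectionOnto).comp
        (C.subtypeL.comp C.orthogonalProjectionOnto)‖ ≤ κ)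
    (G : FC →L[ℝ] E) (hG : ∀ x, G x ∈ C)
    (B : FS →L[ℝ] E) (hB : ∀ y, B y ∈ S)
    (c : ℝ) (hc : 0 < c) (hBlow : ∀ y : FS, c * ‖y‖ ≤ ‖B y‖)
    (X : FC →L[ℝ] FS) (E₀ : FC →L[ℝ] E)
    (hE₀ : (S.subtypeL.comp S.orthogonalProjectionOnto).comp E₀ = 0)
    (hdecomp : G = B.comp X + E₀) :
    c * ‖X‖ ≤ κ * ‖G‖ :=
  robustness_core_general C S κ hPSC G hG B hB c hBlow X E₀ hE₀ hdecomp
end
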